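/- Let m, M, K, C₀ > 0 and let U : ℝ → ℝ be differentiable on (0,∞) with U(q) > 0 and U'(q) > 0 for q > 0. Define the universal damping law C(q) = C₀·√(m/M)·U'(q)/√(2K·U(q)) for q > 0. If q : ℝ → ℝ is twice differentiable on an open interval I with q(t) > 0 on I and satisfies m·q''(t) + C(q(t))·q'(t) + U'(q(t)) = 0 on I, then with x(t) = √(2·U(q(t))/K), w(t) = √(m/M)·q'(t), and r(t) = √(M/m)·U'(q(t))/√(2K·U(q(t))), for every t ∈ I: x'(t) = r(t)·w(t) and M·w'(t) = −(C₀·w(t) + K·x(t))·r(t); that is, the transformed dynamics are exactly the linear damped oscillator M·x'' + C₀·x' + K·x = 0 in the reparametrised time. -/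

import Mathlib

/-!
Put `ρ = U'(q)/√(2K U(q))`, so that `r = ρ/√(m/M)`. The universal law reads `C(q) = C₀ √(m/M) ρ`,
and since `K x = √(2K U(q))` also `U'(q) = K x ρ`. The chain rule gives `x' = ρ q' = r w`, and the
equation of motion becomes `m q'' = -(C₀ w + K x) ρ`; multiplying by `√(m/M)` and using
`√(m/M)² = m/M` gives `M w' = -(C₀ w + K x) r`.
-/

open Real

lemma mul_sqrt_two_mul_div {K : ℝ} (hK : 0 < K) (u : ℝ) :
    K * √(2 * u / K) = √(2 * K * u) := by
  rw [← sqrt_sq hK.le, ← sqrt_mul (sq_nonneg K), sqrt_sq hK.le]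
  congr 1
  field_simp

lemma HasDerivAt.sqrt_two_mul_div {f : ℝ → ℝ} {f' K t : ℝ} (hf : HasDerivAt f f' t)
    (hft : 0 < f t) (hK : 0 < K) :
    HasDerivAt (fun s => √(2 * f s / K)) (f' / √(2 * K * f t)) t := by
  convert ((hf.const_mul 2).div_const K).sqrt (by positivity) using 1
  rw [← mul_sqrt_two_mul_div hK]
  field_simp

theorem universal_damping_law_linearises_general
    (m M K C₀ : ℝ) (hm : 0 < m) (hM : 0 < M) (hK : 0 < K)
    (U U' C : ℝ → ℝ)
    (hUdiff : ∀ s > (0:ℝ), HasDerivAt U (U' s) s)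
    (hUpos : ∀ s > (0:ℝ), 0 < U s)
    (hC : ∀ s > (0:ℝ), C s = C₀ * Real.sqrt (m / M) * U' s /
      Real.sqrt (2 * K * U s))
    (I : Set ℝ)
    (q q' q'' : ℝ → ℝ)
    (hq : ∀ t ∈ I, HasDerivAt q (q' t) t)
    (hq' : ∀ t ∈ I, HasDerivAt q' (q'' t) t)
    (hqpos : ∀ t ∈ I, 0 < q t)
    (hode : ∀ t ∈ I, m * q'' t + C (q t) * q' t + U' (q t) = 0)
    (x w r : ℝ → ℝ)
    (hx : ∀ t, x t = Real.sqrt (2 * U (q t) / K))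
    (hw : ∀ t, w t = Real.sqrt (m / M) * q' t)
    (hr : ∀ t, r t = Real.sqrt (M / m) * U' (q t) / Real.sqrt (2 * K * U (q t))) :
    ∀ t ∈ I, HasDerivAt x (r t * w t) t ∧
      HasDerivAt w (-((C₀ * w t + K * x t) * r t) / M) t := by
  intro t ht
  have hqt := hqpos t ht
  set ρ := U' (q t) / √(2 * K * U (q t)) with hρ
  have hs : 0 < √(m / M) := sqrt_pos.mpr (div_pos hm hM)
  have hr_eq : r t = ρ / √(m / M) := by
    rw [hr, ← inv_div m M, sqrt_inv]
    ring
  have hC_eq : C (q t) = C₀ * √(m / M) * ρ := by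
    rw [hC _ hqt, mul_div_assoc]
  have hU'_eq : U' (q t) = K * x t * ρ := by
    rw [hx, mul_sqrt_two_mul_div hK, hρ, mul_div_cancel₀ _ (by positivity [hUpos _ hqt])]
  have hmotion : m * q'' t = -((C₀ * w t + K * x t) * ρ) := by
    have := hode t ht
    rw [hC_eq, hU'_eq] at this
    rw [hw]
    linear_combination this
  have hx' : HasDerivAt x (U' (q t) * q' t / √(2 * K * U (q t))) t := by
    rw [funext hx]
    exact ((hUdiff _ hqt).comp t (hq t ht)).sqrt_two_mul_div (hUpos _ hqt) hK
  have hw' : HasDerivAt w (√(m / M) * q'' t) t := by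
    rw [funext hw]
    exact (hq' t ht).const_mul _
  constructor
  · refine hx'.congr_deriv ?_
    rw [hr_eq, hw, hρ]
    field_simp
  · refine hw'.congr_deriv ?_
    have hs2 : √(m / M) ^ 2 = m / M := sq_sqrt (div_pos hm hM).le
    rw [hr_eq]
    field_simp
    rw [hs2]
    field_simp
    linear_combination hmotion

/-- **sufficiency of the universal damping law.** If the damping
follows the universal law `C(q) = C₀ √(m/M) U'(q)/√(2K U(q))` and `q` solves
`m q'' + C(q) q' + U'(q) = 0` with `q > 0`, then in the transformed variables
`x = √(2U(q)/K)`, `w = √(m/M) q'`, with reparametrisation rate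
`r = √(M/m) U'(q)/√(2K U(q))`, the dynamics are exactly the linear damped
oscillator: `x' = r·w` and `M w' = −(C₀ w + K x)·r`, i.e.
`M x'' + C₀ x' + K x = 0` in the reparametrised time. -/
theorem universal_damping_law_linearises
    (m M K C₀ : ℝ) (hm : 0 < m) (hM : 0 < M) (hK : 0 < K) (hC₀ : 0 < C₀)
    (U U' C : ℝ → ℝ)
    (hUdiff : ∀ s > (0:ℝ), HasDerivAt U (U' s) s)
    (hUpos : ∀ s > (0:ℝ), 0 < U s)
    (hU'pos : ∀ s > (0:ℝ), 0 < U' s)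
    (hC : ∀ s > (0:ℝ), C s = C₀ * Real.sqrt (m / M) * U' s /
      Real.sqrt (2 * K * U s))
    (I : Set ℝ) (hI : IsOpen I)
    (q q' q'' : ℝ → ℝ)
    (hq : ∀ t ∈ I, HasDerivAt q (q' t) t)
    (hq' : ∀ t ∈ I, HasDerivAt q' (q'' t) t)
    (hqpos : ∀ t ∈ I, 0 < q t)
    (hode : ∀ t ∈ I, m * q'' t + C (q t) * q' t + U' (q t) = 0)
    (x w r : ℝ → ℝ)
    (hx : ∀ t, x t = Real.sqrt (2 * U (q t) / K))
    (hw : ∀ t, w t = Real.sqrt (m / M) * q' t)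
    (hr : ∀ t, r t = Real.sqrt (M / m) * U' (q t) / Real.sqrt (2 * K * U (q t))) :
    ∀ t ∈ I, HasDerivAt x (r t * w t) t ∧
      HasDerivAt w (-((C₀ * w t + K * x t) * r t) / M) t :=
  universal_damping_law_linearises_general m M K C₀ hm hM hK U U' C hUdiff hUpos hC I q q' q'' hq
    hq' hqpos hode x w r hx hw hr
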